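/- Let q be prime, W Schwartz on ℝ, R > 0, H = q/R, χ a Dirichlet character mod q, and u an integer coprime to q. Then the Poisson summation identity holds: (√q / R) Σ_{r ∈ ℤ, gcd(r,q)=1} W(r/R) χ(r) e(u r⁻¹ / q) = Σ_{h ∈ ℤ} Ŵ(h/H) q^{−1/2} S_χ(h, u; q), where S_χ(h,u;q) = Σ_{x units mod q} χ(x) e((ux⁻¹ + hx)/q). -/

import Mathlib

noncomputable def eZ (N : ℕ) (x : ZMod N) : ℂ :=
  Complex.exp (2 * Real.pi * Complex.I * ((x.val : ℂ) / (N : ℂ)))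

/-- Twisted Kloosterman sum `S_χ(a,b;q)`. -/
noncomputable def twistedKloosterman (q : ℕ) [NeZero q] (χ : DirichletCharacter ℂ q)
    (a b : ZMod q) : ℂ :=
  ∑ x : (ZMod q)ˣ, χ x * eZ q (a * x + b * (x⁻¹ : (ZMod q)ˣ))

/-! Non-coprime `r` contribute nothing since `χ r = 0`, so the left side is `Σ_r g(r/q) c(r)` with
`g(x) = W(qx/R)` and the `q`-periodic weight `c(a) = χ(a) e(u a⁻¹/q)`. Splitting `r` into residue
classes `a mod q` and applying Poisson summation to each `Σ_n g(a/q + n)` gives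
`Σ_h ĝ(h) Σ_a c(a) e(ha/q)`; the inner sum is `S_χ(h, u; q)` and `ĝ(h) = (R/q) Ŵ(hR/q)`. -/

open Complex MeasureTheory FourierTransform
open scoped SchwartzMap

section eZ

variable {N : ℕ} [NeZero N]

lemma eZ_eq_stdAddChar (x : ZMod N) : eZ N x = ZMod.stdAddChar x := by
  rw [eZ, ZMod.stdAddChar_apply, ZMod.toCircle_apply, mul_div_assoc]

lemma eZ_add (x y : ZMod N) : eZ N (x + y) = eZ N x * eZ N y := by
  simp only [eZ_eq_stdAddChar, AddChar.map_add_eq_mul]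

lemma norm_eZ (x : ZMod N) : ‖eZ N x‖ = 1 := by
  rw [eZ_eq_stdAddChar, ZMod.stdAddChar_apply, Circle.norm_coe]

lemma fourier_val_div_eq_eZ (h : ℤ) (a : ZMod N) :
    fourier h ((a.val / N : ℝ) : UnitAddCircle) = eZ N (h * a) := by
  rw [fourier_coe_apply, eZ_eq_stdAddChar,
    show (h : ZMod N) * a = ((h * a.val : ℤ) : ZMod N) by simp, ZMod.stdAddChar_coe]
  push_cast
  ring_nf

end eZ

namespace SchwartzMap

variable {E : Type*} [NormedAddCommGroup E] [NormedSpace ℝ E]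

noncomputable def dilate (c : ℝ) (hc : c ≠ 0) (f : 𝓢(ℝ, E)) : 𝓢(ℝ, E) :=
  compCLMOfContinuousLinearEquiv ℝ (LinearEquiv.smulOfNeZero ℝ ℝ c hc).toContinuousLinearEquiv f

@[simp]
lemma dilate_apply (c : ℝ) (hc : c ≠ 0) (f : 𝓢(ℝ, E)) (x : ℝ) : dilate c hc f x = f (c * x) :=
  rfl

lemma summable_norm_intCast (f : 𝓢(ℝ, E)) : Summable fun n : ℤ ↦ ‖f n‖ :=
  summable_of_isBigO (Real.summable_abs_int_rpow one_lt_two)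
    ((f.isBigO_cocompact_rpow (-2)).norm_left.comp_tendsto Int.tendsto_coe_cofinite)

end SchwartzMap

lemma Real.fourier_comp_mul_left {E : Type*} [NormedAddCommGroup E] [NormedSpace ℂ E]
    (f : ℝ → E) {c : ℝ} (hc : 0 < c) (ξ : ℝ) :
    𝓕 (fun x ↦ f (c * x)) ξ = c⁻¹ • 𝓕 f (ξ / c) := by
  simp only [Real.fourier_real_eq]
  have phase : ∀ v : ℝ, v * ξ = (c * v) * (ξ / c) := fun v ↦ by field_simp
  simp_rw [phase]
  rw [Measure.integral_comp_mul_left (fun x ↦ 𝐞 (-(x * (ξ / c))) • f x) c,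
    abs_of_pos (inv_pos.mpr hc)]

def ZMod.valAddMulEquiv (q : ℕ) [NeZero q] : ZMod q × ℤ ≃ ℤ :=
  ((ZMod.finEquiv q).symm.toEquiv.prodCongr (Equiv.refl ℤ)).trans
    ((Equiv.prodComm _ _).trans (Int.divModEquiv q).symm)

lemma ZMod.valAddMulEquiv_apply (q : ℕ) [NeZero q] (a : ZMod q) (n : ℤ) :
    ZMod.valAddMulEquiv q (a, n) = n * q + a.val := by
  obtain _ | q := q
  · exact absurd rfl (NeZero.ne 0)
  · rfl

theorem SchwartzMap.tsum_div_natCast_mul_zmod_eq_tsum_fourier {q : ℕ} [NeZero q] (g : 𝓢(ℝ, ℂ))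
    (c : ZMod q → ℂ) :
    ∑' r : ℤ, g (r / q) * c r = ∑' h : ℤ, 𝓕 g h * ∑ a : ZMod q, eZ q (h * a) * c a := by
  set F : ℤ → ℂ := fun r ↦ g (r / q) * c r
  set e := ZMod.valAddMulEquiv q
  have hq : (q : ℝ) ≠ 0 := NeZero.ne _
  have hF : Summable F := by
    obtain ⟨M, hM⟩ := Finite.exists_le fun a ↦ ‖c a‖
    refine .of_norm_bounded
      ((dilate (q : ℝ)⁻¹ (inv_ne_zero hq) g).summable_norm_intCast.mul_right M) fun r ↦ ?_
    rw [norm_mul, dilate_apply, inv_mul_eq_div]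
    gcongr
    exact hM _
  have hFe : Summable (F ∘ e) := e.summable_iff.mpr hF
  have fiber (a : ZMod q) : ∑' n : ℤ, F (e (a, n)) = (∑' h : ℤ, 𝓕 g h * eZ q (h * a)) * c a := by
    have hcast (n : ℤ) : ((n * q + a.val : ℤ) : ZMod q) = a := by simp
    have hdiv (n : ℤ) : ((n * q + a.val : ℤ) : ℝ) / q = a.val / q + n := by
      push_cast
      field_simp
      ring
    simp only [F, e, ZMod.valAddMulEquiv_apply, hcast, hdiv, tsum_mul_right,
      g.tsum_eq_tsum_fourier, fourier_val_div_eq_eZ]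
  have hterm (a : ZMod q) : Summable fun h : ℤ ↦ 𝓕 g h * eZ q (h * a) * c a :=
    .of_norm_bounded ((𝓕 g).summable_norm_intCast.mul_right ‖c a‖) fun h ↦ by
      rw [norm_mul, norm_mul, norm_eZ, mul_one]
  calc ∑' r : ℤ, F r = ∑ a : ZMod q, ∑' n : ℤ, F (e (a, n)) := by
        rw [← e.tsum_eq]
        exact (hFe.tsum_prod' fun a ↦ hFe.prod_factor a).trans (tsum_fintype _)
    _ = ∑' h : ℤ, ∑ a : ZMod q, 𝓕 g h * eZ q (h * a) * c a := by
        simp_rw [fiber, ← tsum_mul_right]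
        exact (Summable.tsum_finsetSum fun a _ ↦ hterm a).symm
    _ = ∑' h : ℤ, 𝓕 g h * ∑ a : ZMod q, eZ q (h * a) * c a := by
        simp_rw [Finset.mul_sum, mul_assoc]

theorem SchwartzMap.tsum_div_mul_zmod_eq_tsum_fourier {q : ℕ} [NeZero q] (W : 𝓢(ℝ, ℂ))
    {R : ℝ} (hR : 0 < R) (c : ZMod q → ℂ) :
    ∑' r : ℤ, W (r / R) * c r =
      ((R / q : ℝ) : ℂ) * ∑' h : ℤ, 𝓕 (W : ℝ → ℂ) (h / (q / R)) * ∑ a, eZ q (h * a) * c a := by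
  have hq : (0 : ℝ) < q := Nat.cast_pos.mpr (Nat.pos_of_neZero q)
  have hqR : 0 < (q : ℝ) / R := div_pos hq hR
  set g := dilate ((q : ℝ) / R) hqR.ne' W
  have hg (r : ℤ) : g (r / q) = W (r / R) := by
    rw [dilate_apply]
    congr 1
    field_simp [hq.ne']
  have hFg (h : ℤ) : 𝓕 g h = ((R / q : ℝ) : ℂ) * 𝓕 (W : ℝ → ℂ) (h / (q / R)) := by
    rw [fourier_coe]
    exact (Real.fourier_comp_mul_left (W : ℝ → ℂ) hqR h).trans (by rw [inv_div, real_smul])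
  simp_rw [← hg, g.tsum_div_natCast_mul_zmod_eq_tsum_fourier, hFg, ← tsum_mul_left, mul_assoc]

lemma twistedKloosterman_eq_sum_zmod (q : ℕ) [NeZero q] (χ : DirichletCharacter ℂ q)
    (a b : ZMod q) :
    twistedKloosterman q χ a b = ∑ x : ZMod q, eZ q (a * x) * (χ x * eZ q (b * x⁻¹)) := by
  refine Fintype.sum_of_injective _ Units.val_injective _ _ (fun x hx ↦ ?_) fun x ↦ ?_
  · rw [χ.map_nonunit fun hu ↦ hx ⟨hu.unit, rfl⟩, zero_mul, mul_zero]
  · rw [eZ_add, ZMod.inv_coe_unit]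
    ring

open scoped Classical in
theorem stmt_17_general (q : ℕ) [NeZero q] (χ : DirichletCharacter ℂ q)
    (W : SchwartzMap ℝ ℂ) (R : ℝ) (hR : 0 < R) (u : ℤ) :
    ((Real.sqrt q / R : ℝ) : ℂ) *
        ∑' r : ℤ, (if IsCoprime r (q : ℤ) then
          W ((r : ℝ) / R) * χ (r : ZMod q) *
            eZ q ((u : ZMod q) * ((r : ZMod q))⁻¹)
        else 0) =
      ∑' h : ℤ,
        FourierTransform.fourier (W : ℝ → ℂ) ((h : ℝ) / ((q : ℝ) / R)) *
          ((Real.sqrt q : ℝ) : ℂ)⁻¹ *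
          twistedKloosterman q χ (h : ZMod q) (u : ZMod q) := by
  have summand (r : ℤ) : (if IsCoprime r (q : ℤ) then
      W ((r : ℝ) / R) * χ (r : ZMod q) * eZ q ((u : ZMod q) * ((r : ZMod q))⁻¹) else 0) =
      W (r / R) * (χ r * eZ q (u * (r : ZMod q)⁻¹)) := by
    split_ifs with hr
    · rw [mul_assoc]
    · rw [χ.map_nonunit (mt (ZMod.coe_int_isUnit_iff_isCoprime r q).mp (mt IsCoprime.symm hr)),
        zero_mul, mul_zero]
  have scale : Real.sqrt q / R * (R / q) = (Real.sqrt q)⁻¹ := by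
    have hq : (0 : ℝ) < q := Nat.cast_pos.mpr (Nat.pos_of_neZero q)
    field_simp
    exact Real.sq_sqrt hq.le
  simp_rw [summand]
  rw [W.tsum_div_mul_zmod_eq_tsum_fourier hR fun a ↦ χ a * eZ q (u * a⁻¹), ← mul_assoc,
    ← ofReal_mul, scale]
  simp_rw [twistedKloosterman_eq_sum_zmod, ← tsum_mul_left]
  congr 1 with h
  push_cast
  ring

open scoped Classical in
theorem stmt_17 (q : ℕ) (hq : q.Prime) [NeZero q] (χ : DirichletCharacter ℂ q)
    (W : SchwartzMap ℝ ℂ) (R : ℝ) (hR : 0 < R) (u : ℤ) (hu : IsCoprime u (q : ℤ)) :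
    ((Real.sqrt q / R : ℝ) : ℂ) *
        ∑' r : ℤ, (if IsCoprime r (q : ℤ) then
          W ((r : ℝ) / R) * χ (r : ZMod q) *
            eZ q ((u : ZMod q) * ((r : ZMod q))⁻¹)
        else 0) =
      ∑' h : ℤ,
        FourierTransform.fourier (W : ℝ → ℂ) ((h : ℝ) / ((q : ℝ) / R)) *
          ((Real.sqrt q : ℝ) : ℂ)⁻¹ *
          twistedKloosterman q χ (h : ZMod q) (u : ZMod q) :=
  stmt_17_general q χ W R hR u
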